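/- If a homogeneous form F of degree d in n variables over ℂ is a direct sum (i.e. F = F_1 + F_2 with nonzero F_1 ∈ S^d V_1, F_2 ∈ S^d V_2 and V = V_1 ⊕ V_2), then its apolar ideal F^⊥ has a minimal generator of degree d. -/

import Mathlib

/-!
Apolarity setup.  `S = ℂ[x_1,…,x_n]` and its dual ring `T = ℂ[α_1,…,α_n]` are both
realized as `MvPolynomial (Fin n) ℂ`; the apolarity action `Θ ⌟ F` (`contract Θ F`)
lets `α_i` act as the partial differentiation operator `∂/∂x_i`.
-/

open MvPolynomial

noncomputable section Apolarity

/-- Partial derivatives on `ℂ[x_1,…,x_n]` commute. -/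
lemma pderiv_pderiv_comm (n : ℕ) (i j : Fin n) (f : MvPolynomial (Fin n) ℂ) :
    pderiv i (pderiv j f) = pderiv j (pderiv i f) := by
  induction f using MvPolynomial.induction_on with
  | C a => simp
  | add p q hp hq => simp [hp, hq]
  | mul_X p k hp =>
    rcases eq_or_ne i k with rfl | hik
    · rcases eq_or_ne j i with rfl | hjk
      · rfl
      · simp only [pderiv_mul, pderiv_X_self, pderiv_X_of_ne hjk, pderiv_X_of_ne hjk.symm,
          map_add, map_zero, map_one, Derivation.map_one_eq_zero, mul_one, mul_zero,
          add_zero, zero_add, hp]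
    · rcases eq_or_ne j k with rfl | hjk
      · simp only [pderiv_mul, pderiv_X_self, pderiv_X_of_ne hik, pderiv_X_of_ne hik.symm,
          map_add, map_zero, map_one, Derivation.map_one_eq_zero, mul_one, mul_zero,
          add_zero, zero_add, hp]
      · simp only [pderiv_mul, pderiv_X_of_ne hik.symm, pderiv_X_of_ne hjk.symm, map_add,
          map_zero, mul_zero, add_zero, zero_add, hp]

variable (n : ℕ)

/-- The endomorphism `∂/∂x_i` of `S = ℂ[x_1,…,x_n]`. -/
def derOp (i : Fin n) : Module.End ℂ (MvPolynomial (Fin n) ℂ) :=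
  (pderiv i).toLinearMap

lemma derOp_commute (i j : Fin n) : Commute (derOp n i) (derOp n j) :=
  LinearMap.ext fun f => pderiv_pderiv_comm n i j f

/-- The commuting product of the operators `(∂/∂x_i)^(m i)`. -/
def piDiffHom : (Fin n → Multiplicative ℕ) →* Module.End ℂ (MvPolynomial (Fin n) ℂ) :=
  MonoidHom.noncommPiCoprod (fun i : Fin n => powersHom _ (derOp n i))
    (fun i j _ x y => ((derOp_commute n i j).pow_pow x y))

/-- The differential operator `∏ i, (∂/∂x_i)^(m i)` attached to an exponent vector `m`. -/
def diffMonoidHom : Multiplicative (Fin n →₀ ℕ) →* Module.End ℂ (MvPolynomial (Fin n) ℂ) :=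
  (piDiffHom n).comp
    (AddMonoidHom.toMultiplicative
      (Finsupp.coeFnAddHom : (Fin n →₀ ℕ) →+ (Fin n → ℕ)))

/-- The apolarity action of the dual ring `T = ℂ[α_1,…,α_n]` on `S = ℂ[x_1,…,x_n]`, as an
algebra homomorphism to differential operators: `α_i` acts as `∂/∂x_i`. -/
def apolarAlgHom :
    MvPolynomial (Fin n) ℂ →ₐ[ℂ] Module.End ℂ (MvPolynomial (Fin n) ℂ) :=
  AddMonoidAlgebra.lift ℂ _ (Fin n →₀ ℕ) (diffMonoidHom n)

variable {n}

/-- The apolarity action `Θ ⌟ F`: apply to `F` the differential operator obtained from `Θ`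
by substituting `∂/∂x_i` for the `i`-th (dual) variable. -/
def contract (Θ F : MvPolynomial (Fin n) ℂ) : MvPolynomial (Fin n) ℂ :=
  apolarAlgHom n Θ F

lemma apolarAlgHom_X (i : Fin n) : apolarAlgHom n (X i) = derOp n i := by
  classical
  have hX : (X i : MvPolynomial (Fin n) ℂ)
      = AddMonoidAlgebra.single (Finsupp.single i 1) (1 : ℂ) := rfl
  rw [hX]
  rw [show apolarAlgHom n (AddMonoidAlgebra.single (Finsupp.single i 1) (1:ℂ))
      = (1:ℂ) • diffMonoidHom n (Multiplicative.ofAdd (Finsupp.single i 1)) from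
    AddMonoidAlgebra.lift_single _ _ _]
  rw [one_smul]
  show piDiffHom n ((AddMonoidHom.toMultiplicative
      (Finsupp.coeFnAddHom : (Fin n →₀ ℕ) →+ (Fin n → ℕ)))
      (Multiplicative.ofAdd (Finsupp.single i 1))) = derOp n i
  have harg : (AddMonoidHom.toMultiplicative
        (Finsupp.coeFnAddHom : (Fin n →₀ ℕ) →+ (Fin n → ℕ)))
        (Multiplicative.ofAdd (Finsupp.single i 1))
      = Pi.mulSingle (M := fun _ : Fin n => Multiplicative ℕ) i (Multiplicative.ofAdd 1) := by
    funext j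
    rcases eq_or_ne j i with rfl | hj
    · show Multiplicative.ofAdd ((Finsupp.single j 1 : Fin n →₀ ℕ) j)
        = Pi.mulSingle (M := fun _ : Fin n => Multiplicative ℕ) j (Multiplicative.ofAdd 1) j
      rw [Finsupp.single_eq_same, Pi.mulSingle_eq_same]
    · show Multiplicative.ofAdd ((Finsupp.single i 1 : Fin n →₀ ℕ) j)
        = Pi.mulSingle (M := fun _ : Fin n => Multiplicative ℕ) i (Multiplicative.ofAdd 1) j
      rw [Finsupp.single_eq_of_ne hj, Pi.mulSingle_eq_of_ne hj]
      exact ofAdd_zero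
  refine (congrArg (piDiffHom n) harg).trans ?_
  rw [piDiffHom]
  exact (MonoidHom.noncommPiCoprod_mulSingle _ _ _).trans rfl

/-- Sanity check: the dual variable `α_i` acts on `F` as `∂F/∂x_i`. -/
@[simp] lemma contract_X (i : Fin n) (F : MvPolynomial (Fin n) ℂ) :
    contract (X i) F = pderiv i F := by
  rw [contract, apolarAlgHom_X]; rfl

/-- The apolar (annihilator) ideal `F^⊥ = {Θ ∈ T : Θ ⌟ F = 0}` of a polynomial `F`. -/
def apolarIdeal (F : MvPolynomial (Fin n) ℂ) : Ideal (MvPolynomial (Fin n) ℂ) where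
  carrier := {Θ | contract Θ F = 0}
  zero_mem' := by simp [contract]
  add_mem' := by
    intro a b ha hb
    simp only [Set.mem_setOf_eq, contract, map_add, LinearMap.add_apply] at *
    rw [ha, hb, add_zero]
  smul_mem' := by
    intro c x hx
    simp only [Set.mem_setOf_eq, smul_eq_mul, contract, map_mul, Module.End.mul_apply] at *
    rw [hx, map_zero]

@[simp] lemma mem_apolarIdeal {Θ F : MvPolynomial (Fin n) ℂ} :
    Θ ∈ apolarIdeal F ↔ contract Θ F = 0 := Iff.rfl

variable (n)

/-- The irrelevant maximal ideal `m = ⟨α_1,…,α_n⟩` of `T`. -/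
def irrIdeal : Ideal (MvPolynomial (Fin n) ℂ) :=
  Ideal.span (Set.range X)

variable {n}

/-- The homogeneous ideal `I` has a minimal generator of degree `k`, i.e. `(I/mI)_k ≠ 0`:
there is a homogeneous element of `I` of degree `k` not belonging to `m * I`. -/
def HasMinGenOfDegree (I : Ideal (MvPolynomial (Fin n) ℂ)) (k : ℕ) : Prop :=
  ∃ Θ, Θ ∈ I ∧ Θ.IsHomogeneous k ∧ Θ ∉ irrIdeal n * I

/-- The homogeneous ideal `I` has at least `r` minimal generators of degree `k`, i.e.
`dim_ℂ (I/mI)_k ≥ r`: there are `r` homogeneous degree-`k` elements of `I` that are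
linearly independent modulo `m * I`. -/
def MinGensAtLeast (I : Ideal (MvPolynomial (Fin n) ℂ)) (k r : ℕ) : Prop :=
  ∃ Θ : Fin r → MvPolynomial (Fin n) ℂ,
    (∀ i, Θ i ∈ I ∧ (Θ i).IsHomogeneous k) ∧
    ∀ c : Fin r → ℂ, (∑ i, c i • Θ i) ∈ irrIdeal n * I → ∀ i, c i = 0

/-- `F` is an `s`-fold direct sum of degree `d`: `F = F_1 + ⋯ + F_s` where the `F_i` are
nonzero degree-`d` forms in independent subspaces `V_i` of the space of linear forms with
`V = V_1 ⊕ ⋯ ⊕ V_s` (i.e. in disjoint sets of variables, up to linear change of variables;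
`F_i ∈ S^d V_i` is expressed as membership in the subalgebra generated by `V_i`). -/
def IsSFoldDirectSum (F : MvPolynomial (Fin n) ℂ) (d s : ℕ) : Prop :=
  ∃ (V : Fin s → Submodule ℂ (MvPolynomial (Fin n) ℂ))
    (G : Fin s → MvPolynomial (Fin n) ℂ),
    (∀ i, V i ≤ homogeneousSubmodule (Fin n) ℂ 1) ∧
    iSupIndep V ∧
    (⨆ i, V i) = homogeneousSubmodule (Fin n) ℂ 1 ∧
    (∀ i, G i ≠ 0 ∧ (G i).IsHomogeneous d ∧ G i ∈ Algebra.adjoin ℂ (V i : Set _)) ∧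
    F = ∑ i, G i

/-- `F` is a direct sum: `F = F₁ + F₂` with `F₁ ∈ S^d V₁`, `F₂ ∈ S^d V₂` nonzero and
`V = V₁ ⊕ V₂`. -/
def IsDirectSum (F : MvPolynomial (Fin n) ℂ) (d : ℕ) : Prop :=
  IsSFoldDirectSum F d 2

/-- `F` is a limit (as `t → 0`) of `s`-fold direct sums of degree `d`. -/
def IsLimitOfSFoldDirectSums (F : MvPolynomial (Fin n) ℂ) (d s : ℕ) : Prop :=
  ∃ G : ℂ → MvPolynomial (Fin n) ℂ,
    (∀ t : ℂ, t ≠ 0 → IsSFoldDirectSum (G t) d s) ∧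
    ∀ m : Fin n →₀ ℕ,
      Filter.Tendsto (fun t => MvPolynomial.coeff m (G t))
        (nhdsWithin (0 : ℂ) {(0 : ℂ)}ᶜ) (nhds (MvPolynomial.coeff m F))

/-- `F` is a limit of direct sums. -/
def IsLimitOfDirectSums (F : MvPolynomial (Fin n) ℂ) (d : ℕ) : Prop :=
  IsLimitOfSFoldDirectSums F d 2

/-- `F` is concise: `(F^⊥)_1 = 0`, i.e. `F` cannot be written using fewer variables. -/
def Concise (F : MvPolynomial (Fin n) ℂ) : Prop :=
  ∀ Θ : MvPolynomial (Fin n) ℂ, Θ.IsHomogeneous 1 → contract Θ F = 0 → Θ = 0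

end Apolarity

/-!
Write `F = F₁ + F₂` with `Fᵢ` in the subalgebra generated by `Vᵢ`. As `V₁ ∩ V₂ = 0`, these
subalgebras meet only in the constants. If `Θ ∈ F^⊥` then `Θ ⌟ F₁ = -(Θ ⌟ F₂)` lies in both, so it
is a constant and is killed by `m`; hence `m F^⊥` annihilates `F₁`. On the other hand `F₁` is not
proportional to `F` (otherwise `F₂` would be a nonzero constant), and in degree `d` the apolarity
pairing is perfect, so some `Θ ∈ (F^⊥)_d` has `Θ ⌟ F₁ = 1`. Such a `Θ` is not in `m F^⊥`.
-/

open Finsupp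

noncomputable section

variable {n : ℕ}

section Contract

lemma contract_mul (Θ Ψ F : MvPolynomial (Fin n) ℂ) :
    contract (Θ * Ψ) F = contract Θ (contract Ψ F) := by
  rw [contract, map_mul]; rfl

lemma contract_C (a : ℂ) (F : MvPolynomial (Fin n) ℂ) : contract (C a) F = a • F := by
  rw [contract, ← algebraMap_eq, AlgHom.commutes]; rfl

lemma contract_one (F : MvPolynomial (Fin n) ℂ) : contract 1 F = F := by
  simpa using contract_C 1 F

lemma contract_zero_right (Θ : MvPolynomial (Fin n) ℂ) : contract Θ 0 = 0 :=
  map_zero (apolarAlgHom n Θ)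

lemma contract_add_right (Θ F G : MvPolynomial (Fin n) ℂ) :
    contract Θ (F + G) = contract Θ F + contract Θ G :=
  map_add (apolarAlgHom n Θ) F G

lemma contract_add_left (Θ Ψ F : MvPolynomial (Fin n) ℂ) :
    contract (Θ + Ψ) F = contract Θ F + contract Ψ F := by
  rw [contract, map_add]; rfl

lemma contract_sum_left {ι : Type*} (s : Finset ι) (Θ : ι → MvPolynomial (Fin n) ℂ)
    (F : MvPolynomial (Fin n) ℂ) : contract (∑ i ∈ s, Θ i) F = ∑ i ∈ s, contract (Θ i) F := by
  rw [contract, map_sum]; exact LinearMap.sum_apply s _ F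

lemma contract_smul_left (a : ℂ) (Θ F : MvPolynomial (Fin n) ℂ) :
    contract (a • Θ) F = a • contract Θ F := by
  rw [contract, map_smul]; rfl

lemma contract_sum_right {ι : Type*} (s : Finset ι) (Θ : MvPolynomial (Fin n) ℂ)
    (F : ι → MvPolynomial (Fin n) ℂ) : contract Θ (∑ i ∈ s, F i) = ∑ i ∈ s, contract Θ (F i) :=
  map_sum (apolarAlgHom n Θ) F s

lemma contract_smul_right (a : ℂ) (Θ F : MvPolynomial (Fin n) ℂ) :
    contract Θ (a • F) = a • contract Θ F :=
  map_smul (apolarAlgHom n Θ) a F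

lemma contract_monomial_add_single (m : Fin n →₀ ℕ) (i : Fin n) (F : MvPolynomial (Fin n) ℂ) :
    contract (monomial (m + single i 1) 1) F = contract (monomial m 1) (pderiv i F) := by
  rw [monomial_add_single, pow_one, contract_mul, contract_X]

end Contract

section MonomialPairing

def multiFactorial (m : Fin n →₀ ℕ) : ℂ := ∏ i, ((m i).factorial : ℂ)

lemma multiFactorial_ne_zero (m : Fin n →₀ ℕ) : multiFactorial m ≠ 0 :=
  Finset.prod_ne_zero_iff.2 fun _ _ => Nat.cast_ne_zero.2 (Nat.factorial_ne_zero _)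

lemma multiFactorial_add_single (m : Fin n →₀ ℕ) (i : Fin n) :
    multiFactorial (m + single i 1) = (m i + 1) * multiFactorial m := by
  classical
  simp only [multiFactorial, Finsupp.add_apply, Finsupp.single_apply]
  rw [← Finset.mul_prod_erase _ _ (Finset.mem_univ i),
    ← Finset.mul_prod_erase _ (fun j => ((m j).factorial : ℂ)) (Finset.mem_univ i), ← mul_assoc]
  congr 1
  · simp [Nat.factorial_succ]
  · exact Finset.prod_congr rfl fun j hj => by simp [(Finset.ne_of_mem_erase hj).symm]

lemma pderiv_monomial_add_single (m : Fin n →₀ ℕ) (i : Fin n) :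
    pderiv i (monomial (m + single i 1) (1 : ℂ)) = ((m i : ℂ) + 1) • monomial m 1 := by
  rw [pderiv_monomial, add_tsub_cancel_right, smul_monomial]
  simp

lemma contract_monomial_monomial {m m' : Fin n →₀ ℕ} (h : m.degree = m'.degree) :
    contract (monomial m 1) (monomial m' 1) = if m = m' then C (multiFactorial m) else 0 := by
  induction hk : m.degree generalizing m m' with
  | zero =>
    rw [hk, eq_comm, degree_eq_zero_iff] at h
    rw [degree_eq_zero_iff] at hk
    subst hk h
    simp [multiFactorial, contract_one]
  | succ k ih =>
    obtain ⟨i, hi⟩ : ∃ i, m i ≠ 0 := by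
      simpa using Finsupp.ne_iff.1 (show m ≠ 0 by rintro rfl; simp at hk)
    obtain ⟨m₀, rfl⟩ : ∃ m₀, m = m₀ + single i 1 := ⟨_, (sub_add_single_one_cancel hi).symm⟩
    rw [contract_monomial_add_single]
    by_cases hi' : m' i = 0
    · have hne : m₀ + single i 1 ≠ m' := fun h' => hi (h' ▸ hi')
      simp [hi', hne, contract_zero_right]
    obtain ⟨m₀', rfl⟩ : ∃ m₀', m' = m₀' + single i 1 := ⟨_, (sub_add_single_one_cancel hi').symm⟩
    have hk₀ : m₀.degree = k := by simpa using hk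
    rw [pderiv_monomial_add_single, contract_smul_right, ih (by simpa [hk₀] using h) hk₀]
    by_cases heq : m₀ = m₀'
    · subst heq
      rw [if_pos rfl, if_pos rfl, multiFactorial_add_single, smul_eq_C_mul, ← C_mul]
    · rw [if_neg heq, if_neg (by simpa using heq), smul_zero]

lemma contract_monomial_of_isHomogeneous {d : ℕ} {m : Fin n →₀ ℕ} {P : MvPolynomial (Fin n) ℂ}
    (hP : P.IsHomogeneous d) (hm : m.degree = d) :
    contract (monomial m 1) P = C (multiFactorial m * coeff m P) := by
  classical
  have hterm : ∀ v ∈ P.support, contract (monomial m 1) (monomial v (coeff v P)) =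
      if m = v then C (multiFactorial m * coeff m P) else 0 := fun v hv => by
    have hdeg : m.degree = v.degree := by
      rw [hm, degree_eq_weight_one]; exact (hP (MvPolynomial.mem_support_iff.1 hv)).symm
    rw [← mul_one (coeff v P), ← smul_eq_mul, ← smul_monomial, contract_smul_right,
      contract_monomial_monomial hdeg]
    split_ifs with h
    · rw [h, smul_eq_C_mul, ← C_mul, mul_comm]
    · exact smul_zero _
  conv_lhs => rw [P.as_sum]
  rw [contract_sum_right, Finset.sum_congr rfl hterm, Finset.sum_ite_eq]
  split_ifs with h
  · rfl
  · rw [MvPolynomial.notMem_support_iff.1 h, mul_zero, C_0]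

end MonomialPairing

section Duality

lemma MvPolynomial.IsHomogeneous.sum_coeff_smul_monomial {d : ℕ} {P : MvPolynomial (Fin n) ℂ}
    (hP : P.IsHomogeneous d) :
    ∑ m ∈ Finset.finsuppAntidiag Finset.univ d, coeff m P • monomial m (1 : ℂ) = P := by
  conv_rhs => rw [P.as_sum]
  refine (Finset.sum_subset (fun m hm => ?_) fun m _ hm => ?_).symm.trans
    (Finset.sum_congr rfl fun m _ => by rw [smul_monomial, smul_eq_mul, mul_one])
  · have hdeg : m.degree = d := by
      rw [degree_eq_weight_one]; exact hP (MvPolynomial.mem_support_iff.1 hm)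
    simpa [degree_eq_sum] using hdeg
  · rw [MvPolynomial.notMem_support_iff.1 hm, zero_smul]

lemma exists_isHomogeneous_contract_eq_C (f : MvPolynomial (Fin n) ℂ →ₗ[ℂ] ℂ) (d : ℕ) :
    ∃ Θ : MvPolynomial (Fin n) ℂ, Θ.IsHomogeneous d ∧
      ∀ P : MvPolynomial (Fin n) ℂ, P.IsHomogeneous d → contract Θ P = C (f P) := by
  set s := Finset.finsuppAntidiag (Finset.univ : Finset (Fin n)) d
  have hs : ∀ m ∈ s, m.degree = d := fun m hm => by
    simpa [s, degree_eq_sum] using hm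
  refine ⟨∑ m ∈ s, (f (monomial m 1) / multiFactorial m) • monomial m 1, ?_, fun P hP => ?_⟩
  · exact (homogeneousSubmodule (Fin n) ℂ d).sum_mem fun m hm =>
      Submodule.smul_mem _ _ (isHomogeneous_monomial _ (hs m hm))
  · calc contract (∑ m ∈ s, (f (monomial m 1) / multiFactorial m) • monomial m 1) P
        = ∑ m ∈ s, C (coeff m P * f (monomial m 1)) := by
          rw [contract_sum_left]
          refine Finset.sum_congr rfl fun m hm => ?_
          rw [contract_smul_left, contract_monomial_of_isHomogeneous hP (hs m hm), smul_eq_C_mul,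
            ← C_mul]
          field_simp [multiFactorial_ne_zero m]
      _ = C (f P) := by
          conv_rhs => rw [← hP.sum_coeff_smul_monomial, map_sum]
          simp_rw [map_smul, smul_eq_mul, map_sum]
          rfl

lemma exists_isHomogeneous_mem_apolarIdeal_contract_eq_one {d : ℕ}
    {F P : MvPolynomial (Fin n) ℂ} (hF : F.IsHomogeneous d) (hP : P.IsHomogeneous d)
    (hPF : P ∉ Submodule.span ℂ {F}) :
    ∃ Θ : MvPolynomial (Fin n) ℂ, Θ.IsHomogeneous d ∧ Θ ∈ apolarIdeal F ∧ contract Θ P = 1 := by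
  obtain ⟨f, hfP, hfF⟩ := Submodule.exists_dual_map_eq_bot_of_notMem hPF inferInstance
  obtain ⟨Θ, hΘ, hΘf⟩ := exists_isHomogeneous_contract_eq_C ((f P)⁻¹ • f) d
  have hfF : f F = 0 := by
    simpa [hfF] using Submodule.mem_map_of_mem (f := f) (Submodule.mem_span_singleton_self F)
  exact ⟨Θ, hΘ, by simp [hΘf F hF, hfF], by simp [hΘf P hP, hfP]⟩

end Duality

section LinearFormAlgebras

variable {V V₁ V₂ : Submodule ℂ (MvPolynomial (Fin n) ℂ)}

lemma pderiv_mem_bot_of_isHomogeneous_one {v : MvPolynomial (Fin n) ℂ} (hv : v.IsHomogeneous 1)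
    (i : Fin n) : pderiv i v ∈ (⊥ : Subalgebra ℂ (MvPolynomial (Fin n) ℂ)) := by
  classical
  rw [← mem_homogeneousSubmodule, homogeneousSubmodule_one_eq_span_X] at hv
  induction hv using Submodule.span_induction with
  | mem x hx =>
    obtain ⟨j, rfl⟩ := hx
    rw [pderiv_X]
    by_cases hij : i = j
    · subst hij; simp
    · simp [Pi.single_eq_of_ne' hij]
  | zero => simp
  | add x y _ _ hx hy => rw [map_add]; exact add_mem hx hy
  | smul a x _ hx => rw [Derivation.map_smul]; exact Subalgebra.smul_mem _ hx a

lemma pderiv_mem_adjoin (hV : V ≤ homogeneousSubmodule (Fin n) ℂ 1) (i : Fin n)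
    {p : MvPolynomial (Fin n) ℂ} (hp : p ∈ Algebra.adjoin ℂ (V : Set (MvPolynomial (Fin n) ℂ))) :
    pderiv i p ∈ Algebra.adjoin ℂ (V : Set (MvPolynomial (Fin n) ℂ)) := by
  induction hp using Algebra.adjoin_induction with
  | mem v hv => exact bot_le (α := Subalgebra ℂ _) (pderiv_mem_bot_of_isHomogeneous_one (hV hv) i)
  | algebraMap r => rw [Derivation.map_algebraMap]; exact zero_mem _
  | add x y _ _ hx hy => rw [map_add]; exact add_mem hx hy
  | mul x y hx' hy' hx hy =>
    rw [pderiv_mul]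
    exact add_mem (mul_mem hx hy') (mul_mem hx' hy)

lemma contract_mem_adjoin (hV : V ≤ homogeneousSubmodule (Fin n) ℂ 1) (Θ : MvPolynomial (Fin n) ℂ)
    {p : MvPolynomial (Fin n) ℂ} (hp : p ∈ Algebra.adjoin ℂ (V : Set (MvPolynomial (Fin n) ℂ))) :
    contract Θ p ∈ Algebra.adjoin ℂ (V : Set (MvPolynomial (Fin n) ℂ)) := by
  induction Θ using MvPolynomial.induction_on generalizing p with
  | C a => rw [contract_C]; exact Subalgebra.smul_mem _ hp a
  | add Θ Ψ hΘ hΨ => rw [contract_add_left]; exact add_mem (hΘ hp) (hΨ hp)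
  | mul_X Θ i hΘ => rw [contract_mul, contract_X]; exact hΘ (pderiv_mem_adjoin hV i hp)

/-- The linear substitution projecting onto `V₁` along a complement containing `V₂` fixes the
algebra generated by `V₁` and sends the algebra generated by `V₂` to the constants. -/
lemma adjoin_inf_adjoin_eq_bot (h₁ : V₁ ≤ homogeneousSubmodule (Fin n) ℂ 1)
    (h₂ : V₂ ≤ homogeneousSubmodule (Fin n) ℂ 1) (hdis : Disjoint V₁ V₂) :
    Algebra.adjoin ℂ (V₁ : Set (MvPolynomial (Fin n) ℂ)) ⊓ Algebra.adjoin ℂ (V₂ : Set _) = ⊥ := by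
  obtain ⟨W, hW⟩ := (V₁ ⊔ V₂).exists_isCompl
  have hc : IsCompl V₁ (V₂ ⊔ W) := hdis.isCompl_sup_right_of_isCompl_sup_left hW
  set π := V₁.projection (V₂ ⊔ W) hc
  set φ : MvPolynomial (Fin n) ℂ →ₐ[ℂ] MvPolynomial (Fin n) ℂ := aeval fun i => π (X i)
  have hφπ : ∀ v ∈ homogeneousSubmodule (Fin n) ℂ 1, φ v = π v := by
    rw [homogeneousSubmodule_one_eq_span_X]
    exact LinearMap.eqOn_span' (f := φ.toLinearMap) (g := π) (by rintro _ ⟨i, rfl⟩; simp [φ])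
  have hfix : Algebra.adjoin ℂ (V₁ : Set _) ≤ AlgHom.equalizer φ (AlgHom.id ℂ _) :=
    Algebra.adjoin_le fun v hv => by
      simp [hφπ v (h₁ hv), π, (Submodule.projection_eq_self_iff hc v).2 hv]
  have hkill : Algebra.adjoin ℂ (V₂ : Set _) ≤ (⊥ : Subalgebra ℂ _).comap φ :=
    Algebra.adjoin_le fun v hv => by
      have : π v = 0 := (Submodule.projection_apply_eq_zero_iff hc).2 (Submodule.mem_sup_left hv)
      simp [hφπ v (h₂ hv), this]
  refine eq_bot_iff.2 fun p ⟨hp₁, hp₂⟩ => ?_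
  simpa [show φ p = p from hfix hp₁] using hkill hp₂

end LinearFormAlgebras

section DirectSum

variable {V₁ V₂ : Submodule ℂ (MvPolynomial (Fin n) ℂ)}

lemma irrIdeal_le_apolarIdeal_C (c : ℂ) : irrIdeal n ≤ apolarIdeal (C c) :=
  Ideal.span_le.2 <| Set.range_subset_iff.2 fun i => by simp

lemma irrIdeal_mul_apolarIdeal_add_le (h₁ : V₁ ≤ homogeneousSubmodule (Fin n) ℂ 1)
    (h₂ : V₂ ≤ homogeneousSubmodule (Fin n) ℂ 1) (hdis : Disjoint V₁ V₂)
    {P Q : MvPolynomial (Fin n) ℂ} (hP : P ∈ Algebra.adjoin ℂ (V₁ : Set (MvPolynomial (Fin n) ℂ)))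
    (hQ : Q ∈ Algebra.adjoin ℂ (V₂ : Set (MvPolynomial (Fin n) ℂ))) :
    irrIdeal n * apolarIdeal (P + Q) ≤ apolarIdeal P := by
  refine Ideal.mul_le.2 fun Ψ hΨ Θ hΘ => ?_
  have hΘPQ : contract Θ P = -contract Θ Q := by
    rw [eq_neg_iff_add_eq_zero, ← contract_add_right]; exact hΘ
  have hΘP : contract Θ P ∈ (⊥ : Subalgebra ℂ (MvPolynomial (Fin n) ℂ)) :=
    (adjoin_inf_adjoin_eq_bot h₁ h₂ hdis).le
      ⟨contract_mem_adjoin h₁ Θ hP, hΘPQ ▸ neg_mem (contract_mem_adjoin h₂ Θ hQ)⟩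
  obtain ⟨c, hc⟩ := Algebra.mem_bot.1 hΘP
  rw [mem_apolarIdeal, contract_mul, ← hc]
  exact irrIdeal_le_apolarIdeal_C c hΨ

lemma notMem_span_singleton_add (h₁ : V₁ ≤ homogeneousSubmodule (Fin n) ℂ 1)
    (h₂ : V₂ ≤ homogeneousSubmodule (Fin n) ℂ 1) (hdis : Disjoint V₁ V₂)
    {P Q : MvPolynomial (Fin n) ℂ} (hP : P ∈ Algebra.adjoin ℂ (V₁ : Set (MvPolynomial (Fin n) ℂ)))
    (hQ : Q ∈ Algebra.adjoin ℂ (V₂ : Set (MvPolynomial (Fin n) ℂ))) (hP₀ : P ≠ 0) (hQ₀ : Q ≠ 0)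
    {d : ℕ} (hd : d ≠ 0) (hQd : Q.IsHomogeneous d) :
    P ∉ Submodule.span ℂ {P + Q} := by
  intro hmem
  obtain ⟨a, ha⟩ := Submodule.mem_span_singleton.1 hmem
  have ha₀ : a ≠ 0 := by
    rintro rfl
    exact hP₀ (by rw [← ha, zero_smul])
  have hQP : Q = a⁻¹ • P - P := by
    rw [eq_sub_iff_add_eq']
    conv_rhs => rw [← ha, smul_smul, inv_mul_cancel₀ ha₀, one_smul]
  have hQ₁ : Q ∈ Algebra.adjoin ℂ (V₁ : Set (MvPolynomial (Fin n) ℂ)) :=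
    hQP ▸ sub_mem (Subalgebra.smul_mem _ hP _) hP
  obtain ⟨c, rfl⟩ := Algebra.mem_bot.1 ((adjoin_inf_adjoin_eq_bot h₁ h₂ hdis).le ⟨hQ₁, hQ⟩)
  exact hd (hQd.inj_right (isHomogeneous_C _ c) hQ₀)

end DirectSum

end

/-- If a homogeneous form `F` of degree `d` in `n` variables over `ℂ`
is a direct sum, then its apolar ideal `F^⊥` has a minimal generator of degree `d`. -/
theorem direct_sum_has_equipotent_apolar_generator
    (n d : ℕ) (hd : 1 ≤ d) (F : MvPolynomial (Fin n) ℂ)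
    (hF : F.IsHomogeneous d) (hDS : IsDirectSum F d) :
    HasMinGenOfDegree (apolarIdeal F) d := by
  obtain ⟨V, G, hV, hindep, -, hG, rfl⟩ := hDS
  rw [Fin.sum_univ_two] at hF ⊢
  have hdis : Disjoint (V 0) (V 1) := hindep.pairwiseDisjoint zero_ne_one
  have hG₀ : G 0 ∉ Submodule.span ℂ {G 0 + G 1} :=
    notMem_span_singleton_add (hV 0) (hV 1) hdis (hG 0).2.2 (hG 1).2.2 (hG 0).1 (hG 1).1
      (by omega) (hG 1).2.1
  obtain ⟨Θ, hΘ, hΘF, hΘG₀⟩ :=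
    exists_isHomogeneous_mem_apolarIdeal_contract_eq_one hF (hG 0).2.1 hG₀
  refine ⟨Θ, hΘF, hΘ, fun hmem => ?_⟩
  have : contract Θ (G 0) = 0 :=
    irrIdeal_mul_apolarIdeal_add_le (hV 0) (hV 1) hdis (hG 0).2.2 (hG 1).2.2 hmem
  simp [hΘG₀] at this
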